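/- Let L ≥ 0 be an integer and set n = 2L + 1. The n points xᵢ = (cos(2πi/n), sin(2πi/n)) for i = 0, 1, …, n−1 (the vertices of a regular (2L+1)-gon inscribed in the unit circle S¹ ⊂ ℝ²) form a spherical 2L-design: for every real polynomial p in two variables of total degree at most 2L, (1/n) Σ_{i=0}^{n−1} p(xᵢ) = (1/(2π)) ∫_0^{2π} p(cos θ, sin θ) dθ. -/

import Mathlib

/-!
Since `cos θ = (e^{iθ} + e^{-iθ}) / 2` and `sin θ = (e^{iθ} - e^{-iθ}) / (2i)`, a polynomial
of total degree `d` in `(cos θ, sin θ)` is a trigonometric polynomial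
`∑_{|k| ≤ d} c_k e^{ikθ}`.
On a mode `e^{ikθ}` with `0 < |k| < n`, both the integral average and the average over the
vertices of the regular `n`-gon vanish (the latter is a full geometric sum of a nontrivial
`n`-th root of unity), while for `k = 0` both equal `1`. Hence the two averages agree on all
trigonometric polynomials of degree `< n`, and `2L < 2L + 1`.
-/

open scoped Real
open Complex

noncomputable def expMode (k : ℤ) (θ : ℝ) : ℂ := exp (k * θ * I)

def trigPoly (d : ℕ) : Submodule ℂ (ℝ → ℂ) :=
  Submodule.span ℂ (expMode '' {k | k.natAbs ≤ d})

def PolygonRuleExact (n : ℕ) (f : ℝ → ℂ) : Prop :=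
  IntervalIntegrable f MeasureTheory.volume 0 (2 * π) ∧
    (∑ i : Fin n, f (2 * π * i / n)) / n = (1 / (2 * π)) * ∫ θ in (0 : ℝ)..2 * π, f θ

theorem expMode_add (j k : ℤ) : expMode (j + k) = expMode j * expMode k := by
  ext θ
  simp only [expMode, Pi.mul_apply, ← Complex.exp_add]
  push_cast
  ring_nf

theorem expMode_zero : expMode 0 = 1 := by
  ext θ
  simp [expMode]

@[fun_prop]
theorem continuous_expMode (k : ℤ) : Continuous (expMode k) := by
  unfold expMode
  fun_prop

theorem sum_expMode_polygon {n : ℕ} (hn : n ≠ 0) (k : ℤ) :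
    ∑ i : Fin n, expMode k (2 * π * i / n) = if (n : ℤ) ∣ k then (n : ℂ) else 0 := by
  set ζ := exp (2 * π * I / n) ^ k with hζdef
  have hζ : ∀ i : ℕ, expMode k (2 * π * i / n) = ζ ^ i := by
    intro i
    rw [hζdef, ← Complex.exp_int_mul, ← Complex.exp_nat_mul, expMode]
    push_cast
    ring_nf
  have hprim := Complex.isPrimitiveRoot_exp n hn
  simp only [hζ, Fin.sum_univ_eq_sum_range (fun i => ζ ^ i)]
  split_ifs with hdvd
  · simp [ζ, (hprim.zpow_eq_one_iff_dvd k).mpr hdvd]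
  · have hζ1 : ζ ≠ 1 := fun h => hdvd ((hprim.zpow_eq_one_iff_dvd k).mp h)
    have hζn : ζ ^ n = 1 := by
      rw [hζdef, ← zpow_natCast, ← zpow_mul, mul_comm k, zpow_mul, zpow_natCast,
        hprim.pow_eq_one, one_zpow]
    rw [geom_sum_eq hζ1, hζn, sub_self, zero_div]

theorem integral_expMode (k : ℤ) :
    ∫ θ in (0 : ℝ)..2 * π, expMode k θ = if k = 0 then (2 * π : ℂ) else 0 := by
  split_ifs with hk
  · simp [expMode, hk]
  · have hc : (k : ℂ) * I ≠ 0 := mul_ne_zero (Int.cast_ne_zero.mpr hk) I_ne_zero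
    simp only [expMode, mul_right_comm _ _ I]
    rw [integral_exp_mul_complex hc]
    have : (k : ℂ) * I * ((2 * π : ℝ) : ℂ) = k * (2 * π * I) := by push_cast; ring
    rw [this, Complex.exp_int_mul_two_pi_mul_I]
    simp

theorem polygonRuleExact_expMode {n : ℕ} {k : ℤ} (hk : k.natAbs < n) :
    PolygonRuleExact n (expMode k) := by
  have hn : n ≠ 0 := by omega
  refine ⟨(continuous_expMode k).intervalIntegrable _ _, ?_⟩
  rw [sum_expMode_polygon hn, integral_expMode]
  have hdvd : (n : ℤ) ∣ k ↔ k = 0 :=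
    ⟨fun h => Int.eq_zero_of_dvd_of_natAbs_lt_natAbs h (by simpa using hk),
      fun h => h ▸ dvd_zero _⟩
  rw [if_congr hdvd rfl rfl]
  split_ifs
  · field_simp
  · simp

theorem trigPoly_mono {d e : ℕ} (h : d ≤ e) : trigPoly d ≤ trigPoly e :=
  Submodule.span_mono <| Set.image_mono fun k (hk : k.natAbs ≤ d) => hk.trans h

theorem expMode_mem_trigPoly {k : ℤ} {d : ℕ} (hk : k.natAbs ≤ d) : expMode k ∈ trigPoly d :=
  Submodule.subset_span ⟨k, hk, rfl⟩

theorem trigPoly_mul_le (d e : ℕ) : trigPoly d * trigPoly e ≤ trigPoly (d + e) := by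
  rw [trigPoly, trigPoly, Submodule.span_mul_span]
  refine Submodule.span_le.mpr ?_
  rintro _ ⟨_, ⟨j, hj, rfl⟩, _, ⟨k, hk, rfl⟩, rfl⟩
  show expMode j * expMode k ∈ _
  rw [← expMode_add]
  exact expMode_mem_trigPoly ((Int.natAbs_add_le j k).trans (add_le_add hj hk))

theorem mul_mem_trigPoly {f g : ℝ → ℂ} {d e : ℕ} (hf : f ∈ trigPoly d)
    (hg : g ∈ trigPoly e) : f * g ∈ trigPoly (d + e) :=
  trigPoly_mul_le d e (Submodule.mul_mem_mul hf hg)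

theorem pow_mem_trigPoly {f : ℝ → ℂ} {d : ℕ} (hf : f ∈ trigPoly d) (a : ℕ) :
    f ^ a ∈ trigPoly (d * a) := by
  induction a with
  | zero => simpa [expMode_zero] using expMode_mem_trigPoly (k := 0) le_rfl
  | succ a ih => rw [pow_succ, mul_add_one]; exact mul_mem_trigPoly ih hf

theorem cos_mem_trigPoly : (fun θ : ℝ => (Real.cos θ : ℂ)) ∈ trigPoly 1 := by
  have : (fun θ : ℝ => (Real.cos θ : ℂ)) = (1 / 2 : ℂ) • (expMode 1 + expMode (-1)) := by
    ext θ
    simp only [ofReal_cos, Complex.cos, neg_mul, Pi.smul_apply, Pi.add_apply, expMode,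
      Int.cast_one, Int.cast_neg, one_mul, smul_eq_mul]
    ring
  rw [this]
  exact Submodule.smul_mem _ _
    (Submodule.add_mem _ (expMode_mem_trigPoly le_rfl) (expMode_mem_trigPoly le_rfl))

theorem sin_mem_trigPoly : (fun θ : ℝ => (Real.sin θ : ℂ)) ∈ trigPoly 1 := by
  have : (fun θ : ℝ => (Real.sin θ : ℂ)) = (I / 2 : ℂ) • (expMode (-1) - expMode 1) := by
    ext θ
    simp only [ofReal_sin, Complex.sin, neg_mul, Pi.smul_apply, Pi.sub_apply, expMode,
      Int.cast_neg, Int.cast_one, one_mul, smul_eq_mul]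
    ring_nf
  rw [this]
  exact Submodule.smul_mem _ _
    (Submodule.sub_mem _ (expMode_mem_trigPoly le_rfl) (expMode_mem_trigPoly le_rfl))

theorem eval_cos_sin_mem_trigPoly (p : MvPolynomial (Fin 2) ℝ) :
    (fun θ => (MvPolynomial.eval ![Real.cos θ, Real.sin θ] p : ℂ)) ∈
      trigPoly p.totalDegree := by
  have hsum : (fun θ => (MvPolynomial.eval ![Real.cos θ, Real.sin θ] p : ℂ)) =
      ∑ d ∈ p.support, ((p.coeff d : ℝ) : ℂ) •
        ((fun θ : ℝ => (Real.cos θ : ℂ)) ^ d 0 *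
          (fun θ : ℝ => (Real.sin θ : ℂ)) ^ d 1) := by
    ext θ
    simp [MvPolynomial.eval_eq', Finset.sum_apply, Fin.prod_univ_two]
  rw [hsum]
  refine Submodule.sum_mem _ fun d hd => Submodule.smul_mem _ _ ?_
  have hdeg : d 0 + d 1 ≤ p.totalDegree := by
    simpa [Finsupp.sum_fintype, Fin.sum_univ_two] using MvPolynomial.le_totalDegree hd
  refine trigPoly_mono hdeg ?_
  simpa using mul_mem_trigPoly (pow_mem_trigPoly cos_mem_trigPoly (d 0))
    (pow_mem_trigPoly sin_mem_trigPoly (d 1))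

namespace PolygonRuleExact

variable {n : ℕ} {f g : ℝ → ℂ}

theorem zero : PolygonRuleExact n 0 := ⟨intervalIntegrable_const, by simp⟩

theorem add (hf : PolygonRuleExact n f) (hg : PolygonRuleExact n g) :
    PolygonRuleExact n (f + g) := by
  refine ⟨hf.1.add hg.1, ?_⟩
  simp only [Pi.add_apply, Finset.sum_add_distrib, add_div,
    intervalIntegral.integral_add hf.1 hg.1, mul_add, hf.2, hg.2]

theorem const_smul (c : ℂ) (hf : PolygonRuleExact n f) : PolygonRuleExact n (c • f) := by
  refine ⟨hf.1.const_mul c, ?_⟩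
  simp only [Pi.smul_apply, smul_eq_mul, ← Finset.mul_sum,
    intervalIntegral.integral_const_mul]
  rw [mul_div_assoc, hf.2]
  ring

theorem of_mem_trigPoly {d : ℕ} (hd : d < n) (hf : f ∈ trigPoly d) : PolygonRuleExact n f := by
  induction hf using Submodule.span_induction with
  | mem f hf =>
    obtain ⟨k, hk, rfl⟩ := hf
    exact polygonRuleExact_expMode (hk.trans_lt hd)
  | zero => exact zero
  | add f g _ _ hf hg => exact hf.add hg
  | smul c f _ hf => exact hf.const_smul c

end PolygonRuleExact

theorem stmt_12 (L : ℕ) (p : MvPolynomial (Fin 2) ℝ)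
    (hp : p.totalDegree ≤ 2 * L) :
    (∑ i : Fin (2 * L + 1),
        MvPolynomial.eval
          ![Real.cos (2 * π * i / (2 * L + 1)),
            Real.sin (2 * π * i / (2 * L + 1))] p) / (2 * L + 1)
      = (1 / (2 * π)) *
          ∫ θ in (0 : ℝ)..(2 * π),
            MvPolynomial.eval ![Real.cos θ, Real.sin θ] p := by
  have hexact := (PolygonRuleExact.of_mem_trigPoly (Nat.lt_succ_of_le hp)
    (eval_cos_sin_mem_trigPoly p)).2
  apply Complex.ofReal_injective
  push_cast [← intervalIntegral.integral_ofReal] at hexact ⊢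
  exact hexact
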